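/- arXiv:2103.03290 — 3 statements merged into one kernel-verified Lean document; each statement's English description precedes it below -/
import Mathlib

section
/- A positive monotone weakly decreasing sequence f : ℕ → ℝ is log-convex if and only if for every β > 1 the sequence t ↦ β^t · f(t) is discretely convex, i.e., 2·β^(t+1)·f(t+1) ≤ β^t·f(t) + β^(t+2)·f(t+2) for all t. -/
theorem log_convex_iff_beta_convex
    (f : ℕ → ℝ) (hpos : ∀ t, 0 < f t) (hdec : ∀ t, f (t + 1) ≤ f t) :
    (∀ t, f (t + 1) ^ 2 ≤ f t * f (t + 2)) ↔
      (∀ β : ℝ, 1 < β → ∀ t,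
        2 * β ^ (t + 1) * f (t + 1) ≤ β ^ t * f t + β ^ (t + 2) * f (t + 2)) := by
  constructor
  · intro h β hβ t
    have hb : (0:ℝ) < β := by linarith
    have hx : (0:ℝ) < β ^ t := pow_pos hb t
    have h1 := h t
    have p0 := hpos t
    have p1 := hpos (t+1)
    have p2 := hpos (t+2)
    have e1 : β ^ (t+1) = β ^ t * β := pow_succ β t
    have e2 : β ^ (t+2) = β ^ t * β * β := by
      rw [pow_succ, pow_succ]
    rw [e1, e2]
    set a := Real.sqrt (f t) with ha
    set b := Real.sqrt (f (t+2)) with hbb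
    have ha2 : a ^ 2 = f t := Real.sq_sqrt p0.le
    have hb2 : b ^ 2 = f (t+2) := Real.sq_sqrt p2.le
    have han : 0 ≤ a := Real.sqrt_nonneg _
    have hbn : 0 ≤ b := Real.sqrt_nonneg _
    have hab : f (t+1) ≤ a * b := by
      nlinarith [sq_nonneg (a*b - f (t+1)), sq_nonneg (a*b + f (t+1)), mul_nonneg han hbn]
    have core : 2 * β * f (t+1) ≤ f t + β * β * f (t+2) := by
      nlinarith [sq_nonneg (a - β * b), mul_pos hb p1]
    nlinarith [mul_le_mul_of_nonneg_left core hx.le]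
  · intro h t
    have p0 := hpos t
    have p1 := hpos (t+1)
    have p2 := hpos (t+2)
    have h02 : f (t+2) ≤ f t := le_trans (hdec (t+1)) (hdec t)
    rcases eq_or_lt_of_le h02 with heq | hlt
    · have h1 := hdec t
      have h2 := hdec (t+1)
      nlinarith
    · set β := Real.sqrt (f t / f (t+2)) with hβdef
      have hr : 1 < f t / f (t+2) := (one_lt_div p2).mpr hlt
      have hβ : 1 < β := by
        rw [hβdef, show (1:ℝ) = Real.sqrt 1 by simp]
        exact Real.sqrt_lt_sqrt (by norm_num) hr
      have hb : (0:ℝ) < β := by linarith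
      have hβ2 : β ^ 2 = f t / f (t+2) := Real.sq_sqrt (by positivity)
      have hb2 : β ^ 2 * f (t+2) = f t := by
        rw [hβ2]; field_simp
      have key := h β hβ t
      have e1 : β ^ (t+1) = β ^ t * β := pow_succ β t
      have e2 : β ^ (t+2) = β ^ t * β * β := by rw [pow_succ, pow_succ]
      rw [e1, e2] at key
      have hx : (0:ℝ) < β ^ t := pow_pos hb t
      have step : β * f (t+1) ≤ f t := by
        have h2x : 2 * β ^ t * (β * f (t+1)) ≤ 2 * β ^ t * f t := by nlinarith
        exact le_of_mul_le_mul_left h2x (by positivity)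
      have sq : (β * f (t+1)) * (β * f (t+1)) ≤ f t * f t :=
        mul_le_mul step step (by positivity) p0.le
      nlinarith
end

section
/- Let f : ℕ → ℝ satisfy f(0) = 0, f(t) ≥ 0 for all t, f weakly increasing, discretely concave (f(t+1) - f(t) weakly decreasing in t), and lim_{t→∞} (f(t+1) - f(t)) = 0. Then there exists a summable nonnegative sequence α : ℕ → ℝ such that f(t) = ∑_{s=0}^∞ α(s) · min(s, t) for every t. -/
open Filter

theorem concave_representation_min
    (f : ℕ → ℝ) (h0 : f 0 = 0) (hnn : ∀ t, 0 ≤ f t)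
    (hinc : ∀ t, f t ≤ f (t + 1))
    (hconc : ∀ t, f (t + 2) - f (t + 1) ≤ f (t + 1) - f t)
    (hlim : Tendsto (fun t => f (t + 1) - f t) atTop (nhds 0)) :
    ∃ α : ℕ → ℝ, (∀ s, 0 ≤ α s) ∧ Summable α ∧
      ∀ t, f t = ∑' s : ℕ, α s * (min s t : ℕ) := by
  set d : ℕ → ℝ := fun t => f (t + 1) - f t with hd
  set e : ℕ → ℝ := fun s => d (s - 1) with he
  set α : ℕ → ℝ := fun s => e s - e (s + 1) with hα
  have hαnn : ∀ s, 0 ≤ α s := by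
    intro s
    cases s with
    | zero => simp [hα, he]
    | succ n => have := hconc n; simp only [hα, he, hd]; simp; linarith
  have helim : Tendsto e atTop (nhds 0) := hlim.comp (tendsto_sub_atTop_nat 1)
  have Haux : ∀ m, HasSum (fun k => α (k + m)) (e m) := by
    intro m
    rw [hasSum_iff_tendsto_nat_of_nonneg (fun k => hαnn _)]
    have hps : ∀ n, ∑ k ∈ Finset.range n, α (k + m) = e m - e (n + m) := by
      intro n
      calc ∑ k ∈ Finset.range n, α (k + m)
          = ∑ k ∈ Finset.range n, (e (k + m) - e ((k + 1) + m)) :=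
            Finset.sum_congr rfl (fun i _ => by simp only [hα, Nat.add_right_comm])
        _ = e (0 + m) - e (n + m) := Finset.sum_range_sub' _ n
        _ = e m - e (n + m) := by rw [Nat.zero_add]
    simp only [hps]
    have : Tendsto (fun n => e m - e (n + m)) atTop (nhds (e m - 0)) :=
      tendsto_const_nhds.sub (helim.comp (tendsto_add_atTop_nat m))
    simpa using this
  have hsum : Summable α := by
    have := Haux 0
    simp only [add_zero] at this
    exact this.summable
  have H : ∀ t, HasSum (fun s => α s * ((min s t : ℕ) : ℝ)) (f t) := by
    intro t
    induction t with
    | zero =>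
        have : (fun s => α s * ((min s 0 : ℕ) : ℝ)) = fun _ => 0 := by
          funext s; simp
        rw [this, h0]; exact hasSum_zero
    | succ t ih =>
        have htail : HasSum (fun s => if t + 1 ≤ s then α s else 0) (d t) := by
          have h1 := Haux (t + 1)
          have hinj : Function.Injective (fun k : ℕ => k + (t + 1)) :=
            add_left_injective _
          have h0' : ∀ x ∉ Set.range (fun k : ℕ => k + (t + 1)),
              (if t + 1 ≤ x then α x else 0) = 0 := by
            intro x hx
            rw [if_neg]
            intro hle
            exact hx ⟨x - (t + 1), Nat.sub_add_cancel hle⟩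
          rw [← hinj.hasSum_iff h0']
          have : ((fun s => if t + 1 ≤ s then α s else 0) ∘ fun k : ℕ => k + (t + 1))
              = fun k => α (k + (t + 1)) := by
            funext k; simp [Function.comp]
          rw [this]
          have : e (t + 1) = d t := by simp [he]
          rw [← this]; exact h1
        have hadd := ih.add htail
        have hfun : (fun s => α s * ((min s t : ℕ) : ℝ) + if t + 1 ≤ s then α s else 0)
            = fun s => α s * ((min s (t + 1) : ℕ) : ℝ) := by
          funext s
          rcases le_or_gt s t with h | h
          · rw [min_eq_left h, min_eq_left (h.trans t.le_succ), if_neg (by omega)]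
            ring
          · rw [min_eq_right h.le, min_eq_right (Nat.succ_le_of_lt h),
              if_pos (show t + 1 ≤ s from h)]
            push_cast; ring
        rw [hfun] at hadd
        have : f t + d t = f (t + 1) := by simp [hd]
        rwa [this] at hadd
  exact ⟨α, hαnn, hsum, fun t => (H t).tsum_eq.symm⟩
end

section
/- The standard quasi-hyperbolic discount factor cannot be written as a (countable) convex combination of exponential discount factors: if β ∈ (0,1), δ ∈ (0,1), and there exist weights a_i ≥ 0 and rates δ_i ∈ (0,1) (i ∈ ℕ) with β·δ^t = ∑_i a_i·δ_i^t for all t ≥ 1, then δ_i = δ for every i with a_i > 0, which forces β = ∑_{i : a_i>0} a_i, contradicting β·δ^t = ∑ a_i δ_i^t at t = 0 unless β = 1. -/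
theorem quasi_hyperbolic_not_convex_combination
    (β δ : ℝ) (hβ0 : 0 < β) (hβ1 : β < 1) (hδ0 : 0 < δ) (hδ1 : δ < 1)
    (a : ℕ → ℝ) (ha : ∀ i, 0 ≤ a i)
    (d : ℕ → ℝ) (hd : ∀ i, 0 < d i ∧ d i < 1)
    (hsummable : ∀ t : ℕ, Summable (fun i => a i * d i ^ t))
    (hweights : ∑' i, a i = 1)
    (heq : ∀ t : ℕ, 1 ≤ t → β * δ ^ t = ∑' i, a i * d i ^ t) :
    False := by
  set f : ℕ → ℝ := fun i => a i * d i * (d i - δ) ^ 2 with hf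
  have hfeq : ∀ i, f i = a i * d i ^ 3 - 2 * δ * (a i * d i ^ 2) + δ ^ 2 * (a i * d i ^ 1) := by
    intro i; simp only [hf]; ring
  have hs1 := hsummable 1
  have hs2 := hsummable 2
  have hs3 := hsummable 3
  have hfs : Summable f := by
    have : Summable (fun i => a i * d i ^ 3 - 2 * δ * (a i * d i ^ 2) + δ ^ 2 * (a i * d i ^ 1)) :=
      (hs3.sub (hs2.mul_left _)).add (hs1.mul_left _)
    exact this.congr fun i => (hfeq i).symm
  have hft : ∑' i, f i = 0 := by
    calc ∑' i, f i
        = ∑' i, (a i * d i ^ 3 - 2 * δ * (a i * d i ^ 2) + δ ^ 2 * (a i * d i ^ 1)) :=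
          tsum_congr hfeq
      _ = (∑' i, a i * d i ^ 3) - 2 * δ * (∑' i, a i * d i ^ 2)
            + δ ^ 2 * (∑' i, a i * d i ^ 1) := by
          rw [Summable.tsum_add (hs3.sub (hs2.mul_left _)) (hs1.mul_left _),
            Summable.tsum_sub hs3 (hs2.mul_left _), tsum_mul_left, tsum_mul_left]
      _ = (β * δ ^ 3) - 2 * δ * (β * δ ^ 2) + δ ^ 2 * (β * δ ^ 1) := by
          rw [heq 1 le_rfl, heq 2 (by norm_num), heq 3 (by norm_num)]
      _ = 0 := by ring
  have hfnn : ∀ i, 0 ≤ f i := fun i =>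
    mul_nonneg (mul_nonneg (ha i) (hd i).1.le) (sq_nonneg _)
  have hfz : ∀ i, f i = 0 := fun i =>
    le_antisymm (hft ▸ Summable.le_tsum hfs i fun j _ => hfnn j) (hfnn i)
  have key : ∀ i, a i * d i = a i * δ := by
    intro i
    rcases eq_or_lt_of_le (ha i) with h | h
    · rw [← h]; ring
    · have := hfz i
      have hdδ : d i = δ := by
        have h2 : (d i - δ) ^ 2 = 0 := by
          by_contra hne
          have : a i * d i * (d i - δ) ^ 2 ≠ 0 :=
            mul_ne_zero (mul_ne_zero h.ne' (hd i).1.ne') hne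
          exact this (hfz i)
        have := pow_eq_zero_iff (n := 2) (by norm_num) |>.mp h2
        linarith
      rw [hdδ]
  have : β * δ ^ 1 = δ := by
    rw [heq 1 le_rfl]
    calc ∑' i, a i * d i ^ 1 = ∑' i, a i * δ := by
          apply tsum_congr; intro i; rw [pow_one]; exact key i
      _ = (∑' i, a i) * δ := tsum_mul_right
      _ = δ := by rw [hweights, one_mul]
  rw [pow_one] at this
  have hβ : β = 1 := by
    have := mul_right_cancel₀ hδ0.ne' (this.trans (one_mul δ).symm)
    exact this
  linarith
end
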